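/- arXiv:1902.04650 — 2 statements merged into one kernel-verified Lean document; each statement's English description precedes it below -/
import Mathlib

section
/- In the adversarial contamination setup, for every pair of positive integers (k,n) and every ε ∈ [0,1], the sample mean satisfies E[d_{L2}(X̄_n, θ*)] ≤ (1/n)^{1/2} + √2 · ε. -/
open MeasureTheory ProbabilityTheory

noncomputable section

/-- The probability simplex `Δ^{k-1}` in `ℝ^k`. -/
def simplex (k : ℕ) : Set (Fin k → ℝ) :=
  {v | (∀ j, 0 ≤ v j) ∧ ∑ j, v j = 1}

/-- Euclidean (`L²`) distance between two points of the simplex. -/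
def dL2 {k : ℕ} (u v : Fin k → ℝ) : ℝ := Real.sqrt (∑ j, (u j - v j) ^ 2)

/-! By the triangle inequality, `d(X̄, θ) ≤ d(X̄, Ȳ) + d(Ȳ, θ)`. Since `X̄ - Ȳ` averages at most
`εn` nonzero differences of simplex points, each of length at most `√2` (the diameter of the
simplex), the first term is at most `√2 ε` pointwise. For the second, `E d(Ȳ, θ) ≤ √(E d(Ȳ, θ)²)`
and `E d(Ȳ, θ)² = ∑ⱼ Var Ȳⱼ = n⁻² ∑ᵢ ∑ⱼ Var Yᵢⱼ` by independence; finally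
`∑ⱼ Var Yᵢⱼ ≤ ∑ⱼ E Yᵢⱼ² ≤ ∑ⱼ E Yᵢⱼ = 1`, giving `E d(Ȳ, θ) ≤ √(1/n)`. -/

open Finset

section

variable {n k : ℕ}

def sampleMean (x : Fin n → Fin k → ℝ) : Fin k → ℝ :=
  fun j => (1 / n : ℝ) * ∑ i, x i j

lemma le_one_of_mem_simplex {v : Fin k → ℝ} (hv : v ∈ simplex k) (j : Fin k) :
    v j ≤ 1 :=
  hv.2 ▸ single_le_sum (fun i _ => hv.1 i) (mem_univ j)

lemma sum_sq_le_one_of_mem_simplex {v : Fin k → ℝ} (hv : v ∈ simplex k) :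
    ∑ j, v j ^ 2 ≤ 1 :=
  hv.2 ▸ sum_le_sum fun j _ => by nlinarith [hv.1 j, le_one_of_mem_simplex hv j]

lemma dL2_eq_dist (u v : Fin k → ℝ) :
    dL2 u v = dist (WithLp.toLp 2 u) (WithLp.toLp 2 v) := by
  simp [dL2, EuclideanSpace.dist_eq, Real.dist_eq, sq_abs]

lemma dL2_sq (u v : Fin k → ℝ) : dL2 u v ^ 2 = ∑ j, (u j - v j) ^ 2 :=
  Real.sq_sqrt (sum_nonneg fun _ _ => sq_nonneg _)

lemma dL2_nonneg (u v : Fin k → ℝ) : 0 ≤ dL2 u v := Real.sqrt_nonneg _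

lemma dL2_triangle (u v w : Fin k → ℝ) : dL2 u w ≤ dL2 u v + dL2 v w := by
  simpa only [dL2_eq_dist] using dist_triangle _ _ _

lemma dL2_le_sqrt_two_of_mem_simplex {u v : Fin k → ℝ} (hu : u ∈ simplex k)
    (hv : v ∈ simplex k) : dL2 u v ≤ Real.sqrt 2 := by
  refine Real.sqrt_le_sqrt ?_
  calc ∑ j, (u j - v j) ^ 2 ≤ ∑ j, (u j + v j) := sum_le_sum fun j _ => by
        nlinarith [hu.1 j, hv.1 j, le_one_of_mem_simplex hu j, le_one_of_mem_simplex hv j]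
    _ = 2 := by rw [sum_add_distrib, hu.2, hv.2]; norm_num

lemma toLp_sampleMean (x : Fin n → Fin k → ℝ) :
    WithLp.toLp 2 (sampleMean x) = (1 / n : ℝ) • ∑ i, WithLp.toLp 2 (x i) := by
  rw [← WithLp.toLp_sum, ← WithLp.toLp_smul]
  congr 1
  ext j
  simp [sampleMean]

lemma dL2_sampleMean_le (x y : Fin n → Fin k → ℝ) :
    dL2 (sampleMean x) (sampleMean y) ≤ (1 / n : ℝ) * ∑ i, dL2 (x i) (y i) := by
  simp only [dL2_eq_dist, toLp_sampleMean, dist_smul₀, Real.norm_eq_abs,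
    abs_of_nonneg (by positivity : (0 : ℝ) ≤ 1 / n)]
  exact mul_le_mul_of_nonneg_left (dist_sum_sum_le _ _ _) (by positivity)

lemma dL2_sampleMean_le_card_ne {x y : Fin n → Fin k → ℝ}
    (hx : ∀ i, x i ∈ simplex k) (hy : ∀ i, y i ∈ simplex k) :
    dL2 (sampleMean x) (sampleMean y) ≤ Real.sqrt 2 * #{i | x i ≠ y i} / n := by
  have hterm : ∀ i, dL2 (x i) (y i) ≤ if x i ≠ y i then Real.sqrt 2 else 0 := fun i => by
    split_ifs with h
    · exact dL2_le_sqrt_two_of_mem_simplex (hx i) (hy i)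
    · simp [not_not.1 h, dL2]
  calc dL2 (sampleMean x) (sampleMean y) ≤ (1 / n : ℝ) * ∑ i, dL2 (x i) (y i) :=
        dL2_sampleMean_le x y
    _ ≤ (1 / n : ℝ) * ∑ i, if x i ≠ y i then Real.sqrt 2 else 0 := by
        gcongr with i; exact hterm i
    _ = Real.sqrt 2 * #{i | x i ≠ y i} / n := by
        rw [sum_ite, sum_const, sum_const_zero, nsmul_eq_mul]; ring

section Moments

variable {Ω : Type*} [MeasurableSpace Ω] {μ : Measure Ω}

lemma integral_le_sqrt_integral_sq [IsProbabilityMeasure μ] {f : Ω → ℝ} (hf : MemLp f 2 μ) :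
    ∫ ω, f ω ∂μ ≤ Real.sqrt (∫ ω, f ω ^ 2 ∂μ) := by
  refine Real.le_sqrt_of_sq_le ?_
  have hvar := variance_nonneg f μ
  rw [variance_eq_sub hf] at hvar
  simpa [sub_nonneg] using hvar

lemma memLp_coord_of_mem_simplex [IsFiniteMeasure μ] {V : Ω → Fin k → ℝ}
    (hV : Measurable V) (hval : ∀ ω, V ω ∈ simplex k) (j : Fin k) :
    MemLp (fun ω => V ω j) 2 μ :=
  MemLp.of_bound (measurable_pi_iff.1 hV j).aestronglyMeasurable 1 <| ae_of_all _ fun ω => by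
    rw [Real.norm_eq_abs, abs_le]
    exact ⟨by linarith [(hval ω).1 j], le_one_of_mem_simplex (hval ω) j⟩

lemma sum_variance_le_one_of_mem_simplex [IsProbabilityMeasure μ] {V : Ω → Fin k → ℝ}
    (hV : Measurable V) (hval : ∀ ω, V ω ∈ simplex k) :
    ∑ j, Var[fun ω => V ω j; μ] ≤ 1 := by
  have hsq : ∀ j, Integrable (fun ω => V ω j ^ 2) μ := fun j =>
    (memLp_coord_of_mem_simplex hV hval j).integrable_sq
  calc ∑ j, Var[fun ω => V ω j; μ] ≤ ∑ j, ∫ ω, V ω j ^ 2 ∂μ := sum_le_sum fun j _ =>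
        variance_le_expectation_sq (measurable_pi_iff.1 hV j).aestronglyMeasurable
    _ = ∫ ω, ∑ j, V ω j ^ 2 ∂μ := (integral_finsetSum _ fun j _ => hsq j).symm
    _ ≤ ∫ _ω, (1 : ℝ) ∂μ :=
        integral_mono (integrable_finsetSum _ fun j _ => hsq j) (integrable_const _)
          fun ω => sum_sq_le_one_of_mem_simplex (hval ω)
    _ = 1 := by simp

lemma memLp_dL2 [IsFiniteMeasure μ] {V : Ω → Fin k → ℝ} (hV : ∀ j, MemLp (fun ω => V ω j) 2 μ)
    (θ : Fin k → ℝ) : MemLp (fun ω => dL2 (V ω) θ) 2 μ := by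
  have hmeas : ∀ j, AEMeasurable (fun ω => V ω j) μ := fun j =>
    (hV j).aestronglyMeasurable.aemeasurable
  refine (memLp_two_iff_integrable_sq ?_).2 ?_
  · unfold dL2
    fun_prop
  · simp only [dL2_sq]
    exact integrable_finsetSum _ fun j _ => ((hV j).sub (memLp_const (θ j))).integrable_sq

lemma integral_dL2_sq_eq_sum_variance [IsFiniteMeasure μ] {V : Ω → Fin k → ℝ}
    (hV : ∀ j, MemLp (fun ω => V ω j) 2 μ) {θ : Fin k → ℝ}
    (hθ : ∀ j, ∫ ω, V ω j ∂μ = θ j) :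
    ∫ ω, dL2 (V ω) θ ^ 2 ∂μ = ∑ j, Var[fun ω => V ω j; μ] := by
  have hint : ∀ j, Integrable (fun ω => (V ω j - θ j) ^ 2) μ := fun j =>
    ((hV j).sub (memLp_const (θ j))).integrable_sq
  simp only [dL2_sq]
  rw [integral_finsetSum _ fun j _ => hint j]
  refine sum_congr rfl fun j _ => ?_
  rw [variance_eq_integral (hV j).aestronglyMeasurable.aemeasurable, hθ j]

variable {Y : Fin n → Ω → Fin k → ℝ}

lemma variance_sampleMean_coord [IsFiniteMeasure μ] (hY : ∀ i j, MemLp (fun ω => Y i ω j) 2 μ)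
    (hind : Pairwise fun i i' => Y i ⟂ᵢ[μ] Y i') (j : Fin k) :
    Var[fun ω => sampleMean (fun i => Y i ω) j; μ] =
      (1 / n : ℝ) ^ 2 * ∑ i, Var[fun ω => Y i ω j; μ] := by
  have hcoord : Pairwise fun i i' => (fun ω => Y i ω j) ⟂ᵢ[μ] (fun ω => Y i' ω j) :=
    fun i i' h => (hind h).comp (measurable_pi_apply j) (measurable_pi_apply j)
  unfold sampleMean
  rw [variance_const_mul, ← sum_fn, IndepFun.variance_sum (fun i _ => hY i j)
    fun i _ i' _ h => hcoord h]

lemma memLp_sampleMean_coord [IsFiniteMeasure μ] (hYm : ∀ i, Measurable (Y i))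
    (hval : ∀ i ω, Y i ω ∈ simplex k) (j : Fin k) :
    MemLp (fun ω => sampleMean (fun i => Y i ω) j) 2 μ :=
  (memLp_finsetSum _ fun i _ => memLp_coord_of_mem_simplex (hYm i) (hval i) j).const_mul _

lemma integral_dL2_sampleMean_sq_le [IsProbabilityMeasure μ] (hn : 0 < n)
    (hYm : ∀ i, Measurable (Y i)) (hval : ∀ i ω, Y i ω ∈ simplex k)
    (hind : Pairwise fun i i' => Y i ⟂ᵢ[μ] Y i') {θ : Fin k → ℝ}
    (hθ : ∀ i j, ∫ ω, Y i ω j ∂μ = θ j) :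
    ∫ ω, dL2 (sampleMean fun i => Y i ω) θ ^ 2 ∂μ ≤ 1 / n := by
  have hY : ∀ i j, MemLp (fun ω => Y i ω j) 2 μ := fun i =>
    memLp_coord_of_mem_simplex (hYm i) (hval i)
  have hmean : ∀ j, ∫ ω, sampleMean (fun i => Y i ω) j ∂μ = θ j := fun j => by
    simp only [sampleMean]
    rw [integral_const_mul, integral_finsetSum _ fun i _ => (hY i j).integrable one_le_two]
    simp only [hθ, sum_const, card_univ, Fintype.card_fin, nsmul_eq_mul]
    field_simp
  calc ∫ ω, dL2 (sampleMean fun i => Y i ω) θ ^ 2 ∂μ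
      = (1 / n : ℝ) ^ 2 * ∑ i, ∑ j, Var[fun ω => Y i ω j; μ] := by
        rw [integral_dL2_sq_eq_sum_variance (memLp_sampleMean_coord hYm hval) hmean]
        simp only [variance_sampleMean_coord hY hind, ← mul_sum]
        rw [sum_comm]
    _ ≤ (1 / n : ℝ) ^ 2 * ∑ _i : Fin n, 1 := by
        gcongr with i
        exact sum_variance_le_one_of_mem_simplex (hYm i) (hval i)
    _ = 1 / n := by
        simp only [sum_const, card_univ, Fintype.card_fin, nsmul_eq_mul, mul_one]
        field_simp

lemma integral_dL2_sampleMean_le [IsProbabilityMeasure μ] (hn : 0 < n)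
    (hYm : ∀ i, Measurable (Y i)) (hval : ∀ i ω, Y i ω ∈ simplex k)
    (hind : Pairwise fun i i' => Y i ⟂ᵢ[μ] Y i') {θ : Fin k → ℝ}
    (hθ : ∀ i j, ∫ ω, Y i ω j ∂μ = θ j) :
    ∫ ω, dL2 (sampleMean fun i => Y i ω) θ ∂μ ≤ Real.sqrt (1 / n) :=
  (integral_le_sqrt_integral_sq (memLp_dL2 (memLp_sampleMean_coord hYm hval) θ)).trans
    (Real.sqrt_le_sqrt (integral_dL2_sampleMean_sq_le hn hYm hval hind hθ))

end Moments

end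

theorem sample_mean_L2_risk_adversarial_general
    {Ω : Type} [MeasurableSpace Ω] (μ : Measure Ω) [IsProbabilityMeasure μ]
    (k n : ℕ) (hn : 1 ≤ n)
    (ε : ℝ)
    (Y X : Fin n → Ω → Fin k → ℝ)
    (hYmeas : ∀ i, Measurable (Y i))
    (hYindep : iIndepFun Y μ)
    (hYval : ∀ i ω, Y i ω ∈ simplex k)
    (hXval : ∀ i ω, X i ω ∈ simplex k)
    (θ : Fin k → ℝ)
    (hθmean : ∀ i j, ∫ ω, Y i ω j ∂μ = θ j)
    (hcontam : ∀ᵐ ω ∂μ,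
      ((Finset.univ.filter fun i => X i ω ≠ Y i ω).card : ℝ) ≤ ε * n) :
    ∫ ω, dL2 (fun j => (1 / n : ℝ) * ∑ i, X i ω j) θ ∂μ ≤
      Real.sqrt (1 / n) + Real.sqrt 2 * ε := by
  have hn' : (0 : ℝ) < n := by exact_mod_cast hn
  have hclose : ∀ᵐ ω ∂μ, dL2 (sampleMean fun i => X i ω) θ ≤
      dL2 (sampleMean fun i => Y i ω) θ + Real.sqrt 2 * ε := by
    filter_upwards [hcontam] with ω hω
    have hXY : dL2 (sampleMean fun i => X i ω) (sampleMean fun i => Y i ω) ≤ Real.sqrt 2 * ε :=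
      (dL2_sampleMean_le_card_ne (hXval · ω) (hYval · ω)).trans <| by
        rw [mul_div_assoc]
        gcongr
        exact (div_le_iff₀ hn').2 hω
    linarith [dL2_triangle (sampleMean fun i => X i ω) (sampleMean fun i => Y i ω) θ]
  have hint : Integrable (fun ω => dL2 (sampleMean fun i => Y i ω) θ) μ :=
    (memLp_dL2 (memLp_sampleMean_coord hYmeas hYval) θ).integrable one_le_two
  calc ∫ ω, dL2 (sampleMean fun i => X i ω) θ ∂μ
      ≤ ∫ ω, (dL2 (sampleMean fun i => Y i ω) θ + Real.sqrt 2 * ε) ∂μ :=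
        integral_mono_of_nonneg (ae_of_all _ fun _ => dL2_nonneg _ _)
          (hint.add (integrable_const _)) hclose
    _ = ∫ ω, dL2 (sampleMean fun i => Y i ω) θ ∂μ + Real.sqrt 2 * ε := by
        rw [integral_add hint (integrable_const _), integral_const, probReal_univ, one_smul]
    _ ≤ Real.sqrt (1 / n) + Real.sqrt 2 * ε := by
        gcongr
        exact integral_dL2_sampleMean_le hn hYmeas hYval
          (fun _ _ h => hYindep.indepFun h) hθmean

/-- In the adversarial contamination setup, the sample mean satisfies
`E[d_{L2}(X̄_n, θ*)] ≤ (1/n)^{1/2} + √2·ε`. -/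
theorem sample_mean_L2_risk_adversarial
    {Ω : Type} [MeasurableSpace Ω] (μ : Measure Ω) [IsProbabilityMeasure μ]
    (k n : ℕ) (hk : 1 ≤ k) (hn : 1 ≤ n)
    (ε : ℝ) (hε0 : 0 ≤ ε) (hε1 : ε ≤ 1)
    (Y X : Fin n → Ω → Fin k → ℝ)
    (hYmeas : ∀ i, Measurable (Y i)) (hXmeas : ∀ i, Measurable (X i))
    (hYindep : iIndepFun Y μ)
    (hYid : ∀ i j, IdentDistrib (Y i) (Y j) μ μ)
    (hYval : ∀ i ω, Y i ω ∈ simplex k)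
    (hXval : ∀ i ω, X i ω ∈ simplex k)
    (θ : Fin k → ℝ) (hθ : θ ∈ simplex k)
    (hθmean : ∀ i j, ∫ ω, Y i ω j ∂μ = θ j)
    (hcontam : ∀ᵐ ω ∂μ,
      ((Finset.univ.filter fun i => X i ω ≠ Y i ω).card : ℝ) ≤ ε * n) :
    ∫ ω, dL2 (fun j => (1 / n : ℝ) * ∑ i, X i ω j) θ ∂μ ≤
      Real.sqrt (1 / n) + Real.sqrt 2 * ε :=
  sample_mean_L2_risk_adversarial_general μ k n hn ε Y X hYmeas hYindep hYval hXval θ hθmean hcontam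
end
end

section
/- Let Y_1,…,Y_n be i.i.d. random vectors taking values in the probability simplex Δ^{k-1} whose mean θ* = E[Y_1] has at most s nonzero coordinates (s ≥ 1), and let Ȳ_n := (1/n) Σ_{i=1}^n Y_i. Then for every δ ∈ (0,1), with probability at least 1 − δ, d_H²(Ȳ_n, θ*) ≤ (9.75 s log(2s/δ) + log(2/δ)) / n. -/
/-!
Each coordinate of the sample mean is an average of `n` independent `[0,1]`-valued variables
with mean `p = θ j`, whose moment generating function is dominated by that of a Poisson
variable of mean `p` (convexity of `exp`). The Chernoff bound at the exponent `t = log (a / p)`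
gives tails `exp (-n (a log (a / p) - a + p))`, and this Poisson Kullback–Leibler divergence
dominates the squared Hellinger term `(√a - √p) ^ 2`. Hence `(√Ȳ_j - √θ_j) ^ 2 > u` has
probability at most `2 exp (-n u)`. Coordinates outside the support of `θ` vanish almost surely,
so a union bound over the at most `s` support coordinates with `u = log (2 s / δ) / n` gives
`d_H² ≤ s log (2 s / δ) / n` with probability at least `1 - δ`.
-/

open MeasureTheory ProbabilityTheory

noncomputable section

/-- `v` has at most `s` nonzero coordinates. -/
def sparse {k : ℕ} (s : ℕ) (v : Fin k → ℝ) : Prop :=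
  (Finset.univ.filter fun j => v j ≠ 0).card ≤ s

/-- Hellinger distance between two points of the simplex. -/
def dH {k : ℕ} (u v : Fin k → ℝ) : ℝ :=
  Real.sqrt (∑ j, (Real.sqrt (u j) - Real.sqrt (v j)) ^ 2)

open Real

lemma sq_sqrt_sub_sqrt_le_mul_log_div {a p : ℝ} (ha : 0 ≤ a) (hp : 0 < p) :
    (√a - √p) ^ 2 ≤ a * log (a / p) - a + p := by
  rcases ha.eq_or_lt with rfl | ha
  · simp [sq_sqrt hp.le]
  have hx : 0 < √a / √p := div_pos (sqrt_pos.2 ha) (sqrt_pos.2 hp)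
  have hlog : log (a / p) = 2 * log (√a / √p) := by
    rw [← sqrt_div' a hp.le, log_sqrt (div_pos ha hp).le]; ring
  have key : a * (1 - (√a / √p)⁻¹) = a - √a * √p := by
    rw [inv_div]; field_simp; linear_combination √p * sq_sqrt ha.le
  have := mul_le_mul_of_nonneg_left (one_sub_inv_le_log_of_pos hx) ha.le
  rw [key] at this
  nlinarith [sq_sqrt ha.le, sq_sqrt hp.le]

lemma exp_mul_le_one_add_mul_exp_sub_one (t : ℝ) {x : ℝ} (hx : x ∈ Set.Icc (0 : ℝ) 1) :
    exp (t * x) ≤ 1 + x * (exp t - 1) := by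
  have := convexOn_exp.2 (Set.mem_univ 0) (Set.mem_univ t) (sub_nonneg.2 hx.2) hx.1 (by ring)
  simp only [smul_eq_mul, mul_zero, zero_add, exp_zero] at this
  calc exp (t * x) = exp (x * t) := by rw [mul_comm]
    _ ≤ (1 - x) * 1 + x * exp t := this
    _ = 1 + x * (exp t - 1) := by ring

lemma chernoff_exponent_le (n : ℕ) {a p : ℝ} (ha : 0 < a) (hp : 0 < p) :
    -log (a / p) * (n * a) + n * (p * (exp (log (a / p)) - 1)) ≤ -(n * (√a - √p) ^ 2) := by
  have hkl := mul_le_mul_of_nonneg_left (sq_sqrt_sub_sqrt_le_mul_log_div ha.le hp) n.cast_nonneg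
  rw [exp_log (div_pos ha hp), mul_sub, mul_div_cancel₀ a hp.ne']
  linarith

namespace ProbabilityTheory

variable {Ω : Type*} [MeasurableSpace Ω] {μ : Measure Ω} [IsProbabilityMeasure μ]

lemma mgf_le_exp_integral_mul_exp_sub_one {X : Ω → ℝ} (hX : AEMeasurable X μ)
    (hval : ∀ ω, X ω ∈ Set.Icc (0 : ℝ) 1) (t : ℝ) :
    mgf X μ t ≤ exp (μ[X] * (exp t - 1)) := by
  have hint : Integrable X μ := .of_mem_Icc 0 1 hX (ae_of_all _ hval)
  calc mgf X μ t ≤ ∫ ω, (1 + X ω * (exp t - 1)) ∂μ :=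
        integral_mono (integrable_exp_mul_of_mem_Icc hX (ae_of_all _ hval))
          ((integrable_const 1).add (hint.mul_const _))
          fun ω => exp_mul_le_one_add_mul_exp_sub_one t (hval ω)
    _ = 1 + μ[X] * (exp t - 1) := by
        rw [integral_add (integrable_const 1) (hint.mul_const _), integral_mul_const]
        simp
    _ ≤ exp (μ[X] * (exp t - 1)) := by linarith [add_one_le_exp (μ[X] * (exp t - 1))]

variable {n : ℕ} {X : Fin n → Ω → ℝ} {p : ℝ}

lemma iIndepFun.mgf_sum_le_exp (hindep : iIndepFun X μ) (hmeas : ∀ i, Measurable (X i))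
    (hval : ∀ i ω, X i ω ∈ Set.Icc (0 : ℝ) 1) (hmean : ∀ i, μ[X i] = p) (t : ℝ) :
    mgf (∑ i, X i) μ t ≤ exp (n * (p * (exp t - 1))) := by
  rw [hindep.mgf_sum hmeas]
  calc ∏ i, mgf (X i) μ t ≤ ∏ _i : Fin n, exp (p * (exp t - 1)) :=
        Finset.prod_le_prod (fun i _ => mgf_nonneg) fun i _ => hmean i ▸
          mgf_le_exp_integral_mul_exp_sub_one (hmeas i).aemeasurable (hval i) t
    _ = exp (n * (p * (exp t - 1))) := by simp [← exp_nat_mul]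

lemma iIndepFun.exp_mul_mgf_sum_le (hindep : iIndepFun X μ) (hmeas : ∀ i, Measurable (X i))
    (hval : ∀ i ω, X i ω ∈ Set.Icc (0 : ℝ) 1) (hmean : ∀ i, μ[X i] = p) (hp : 0 < p)
    {a : ℝ} (ha : 0 < a) :
    exp (-log (a / p) * (n * a)) * mgf (∑ i, X i) μ (log (a / p)) ≤
      exp (-(n * (√a - √p) ^ 2)) :=
  calc _ ≤ exp (-log (a / p) * (n * a)) * exp (n * (p * (exp (log (a / p)) - 1))) := by
        gcongr; exact hindep.mgf_sum_le_exp hmeas hval hmean _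
    _ ≤ exp (-(n * (√a - √p) ^ 2)) := by
        rw [← exp_add]; exact exp_le_exp.2 (chernoff_exponent_le n ha hp)

lemma iIndepFun.measureReal_sum_ge_le (hindep : iIndepFun X μ) (hmeas : ∀ i, Measurable (X i))
    (hval : ∀ i ω, X i ω ∈ Set.Icc (0 : ℝ) 1) (hmean : ∀ i, μ[X i] = p) (hp : 0 < p)
    {a : ℝ} (hpa : p ≤ a) :
    μ.real {ω | n * a ≤ ∑ i, X i ω} ≤ exp (-(n * (√a - √p) ^ 2)) := by
  have h := measure_ge_le_exp_mul_mgf (n * a) (log_nonneg ((one_le_div hp).2 hpa))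
    (hindep.integrable_exp_mul_sum (s := .univ) hmeas fun i _ =>
      integrable_exp_mul_of_mem_Icc (hmeas i).aemeasurable (ae_of_all _ (hval i)))
  simp only [Finset.sum_apply] at h
  exact h.trans (hindep.exp_mul_mgf_sum_le hmeas hval hmean hp (hp.trans_le hpa))

lemma iIndepFun.measureReal_sum_le_le (hindep : iIndepFun X μ) (hmeas : ∀ i, Measurable (X i))
    (hval : ∀ i ω, X i ω ∈ Set.Icc (0 : ℝ) 1) (hmean : ∀ i, μ[X i] = p)
    {a : ℝ} (ha : 0 < a) (hap : a ≤ p) :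
    μ.real {ω | ∑ i, X i ω ≤ n * a} ≤ exp (-(n * (√a - √p) ^ 2)) := by
  have hp := ha.trans_le hap
  have h := measure_le_le_exp_mul_mgf (n * a)
    (log_nonpos (div_pos ha hp).le ((div_le_one hp).2 hap))
    (hindep.integrable_exp_mul_sum (s := .univ) hmeas fun i _ =>
      integrable_exp_mul_of_mem_Icc (hmeas i).aemeasurable (ae_of_all _ (hval i)))
  simp only [Finset.sum_apply] at h
  exact h.trans (hindep.exp_mul_mgf_sum_le hmeas hval hmean hp ha)

lemma iIndepFun.measureReal_le_sqrt_mean_le (hindep : iIndepFun X μ)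
    (hmeas : ∀ i, Measurable (X i)) (hval : ∀ i ω, X i ω ∈ Set.Icc (0 : ℝ) 1)
    (hmean : ∀ i, μ[X i] = p) (hn : 0 < n) (hp : 0 < p) {b : ℝ} (hpb : √p ≤ b) :
    μ.real {ω | b ≤ √((1 / n : ℝ) * ∑ i, X i ω)} ≤ exp (-(n * (b - √p) ^ 2)) := by
  have hb : 0 < b := (sqrt_pos.2 hp).trans_le hpb
  calc _ ≤ μ.real {ω | n * b ^ 2 ≤ ∑ i, X i ω} := by
        refine measureReal_mono fun ω hω => ?_
        have hsq := (le_sqrt' hb).1 hω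
        rwa [one_div, inv_mul_eq_div, le_div_iff₀' (by positivity)] at hsq
    _ ≤ exp (-(n * (√(b ^ 2) - √p) ^ 2)) :=
        hindep.measureReal_sum_ge_le hmeas hval hmean hp ((sqrt_le_left hb.le).1 hpb)
    _ = exp (-(n * (b - √p) ^ 2)) := by rw [sqrt_sq hb.le]

lemma iIndepFun.measureReal_sqrt_mean_lt_le (hindep : iIndepFun X μ)
    (hmeas : ∀ i, Measurable (X i)) (hval : ∀ i ω, X i ω ∈ Set.Icc (0 : ℝ) 1)
    (hmean : ∀ i, μ[X i] = p) (hn : 0 < n) {b : ℝ} (hbp : b ≤ √p) :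
    μ.real {ω | √((1 / n : ℝ) * ∑ i, X i ω) < b} ≤ exp (-(n * (b - √p) ^ 2)) := by
  rcases le_or_gt b 0 with hb | hb
  · have hempty : {ω | √((1 / n : ℝ) * ∑ i, X i ω) < b} = ∅ :=
      Set.eq_empty_of_forall_notMem fun ω hω => (hω.trans_le hb).not_ge (sqrt_nonneg _)
    rw [hempty, measureReal_empty]
    positivity
  calc _ ≤ μ.real {ω | ∑ i, X i ω ≤ n * b ^ 2} := by
        refine measureReal_mono fun ω hω => ?_
        have hsq := ((sqrt_lt' hb).1 hω).le
        rwa [one_div, inv_mul_eq_div, div_le_iff₀' (by positivity)] at hsq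
    _ ≤ exp (-(n * (√(b ^ 2) - √p) ^ 2)) :=
        hindep.measureReal_sum_le_le hmeas hval hmean (by positivity) ((le_sqrt' hb).1 hbp)
    _ = exp (-(n * (b - √p) ^ 2)) := by rw [sqrt_sq hb.le]

lemma iIndepFun.measureReal_sq_sqrt_mean_sub_sqrt_gt_le (hindep : iIndepFun X μ)
    (hmeas : ∀ i, Measurable (X i)) (hval : ∀ i ω, X i ω ∈ Set.Icc (0 : ℝ) 1)
    (hmean : ∀ i, μ[X i] = p) (hn : 0 < n) (hp : 0 < p) {u : ℝ} (hu : 0 ≤ u) :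
    μ.real {ω | u < (√((1 / n : ℝ) * ∑ i, X i ω) - √p) ^ 2} ≤ 2 * exp (-(n * u)) := by
  set m := fun ω => √((1 / n : ℝ) * ∑ i, X i ω)
  calc _ ≤ μ.real ({ω | √p + √u ≤ m ω} ∪ {ω | m ω < √p - √u}) := by
        refine measureReal_mono fun ω hω => ?_
        have hdev := sqrt_lt_sqrt hu hω
        rw [sqrt_sq_eq_abs] at hdev
        rcases lt_abs.1 hdev with hdev | hdev
        · exact Or.inl (show √p + √u ≤ m ω by simp only [m]; linarith)
        · exact Or.inr (show m ω < √p - √u by simp only [m]; linarith)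
    _ ≤ μ.real {ω | √p + √u ≤ m ω} + μ.real {ω | m ω < √p - √u} := measureReal_union_le _ _
    _ ≤ exp (-(n * (√p + √u - √p) ^ 2)) + exp (-(n * (√p - √u - √p) ^ 2)) :=
        add_le_add
          (hindep.measureReal_le_sqrt_mean_le hmeas hval hmean hn hp
            (le_add_of_nonneg_right (sqrt_nonneg u)))
          (hindep.measureReal_sqrt_mean_lt_le hmeas hval hmean hn
            (sub_le_self _ (sqrt_nonneg u)))
    _ = 2 * exp (-(n * u)) := by
        rw [add_sub_cancel_left, sub_sub_cancel_left, neg_sq, sq_sqrt hu]; ring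

end ProbabilityTheory

lemma apply_mem_Icc_of_mem_simplex {k : ℕ} {v : Fin k → ℝ} (hv : v ∈ simplex k) (j : Fin k) :
    v j ∈ Set.Icc (0 : ℝ) 1 :=
  ⟨hv.1 j, hv.2 ▸ Finset.single_le_sum (fun j _ => hv.1 j) (Finset.mem_univ j)⟩

lemma dH_sq {k : ℕ} (u v : Fin k → ℝ) : dH u v ^ 2 = ∑ j, (√(u j) - √(v j)) ^ 2 :=
  sq_sqrt (Finset.sum_nonneg fun _ _ => sq_nonneg _)

lemma dH_sq_le_of_sparse {k s : ℕ} {m θ : Fin k → ℝ} (hθ : sparse s θ) {u : ℝ} (hu : 0 ≤ u)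
    (hsupp : ∀ j, θ j ≠ 0 → (√(m j) - √(θ j)) ^ 2 ≤ u) (hoff : ∀ j, θ j = 0 → m j = 0) :
    dH m θ ^ 2 ≤ s * u := by
  rw [dH_sq, ← Finset.sum_filter_of_ne (p := fun j => θ j ≠ 0)
    fun j _ h hθj => h (by simp [hoff j hθj, hθj])]
  calc _ ≤ (Finset.univ.filter fun j => θ j ≠ 0).card • u :=
        Finset.sum_le_card_nsmul _ _ _ fun j hj => hsupp j (Finset.mem_filter.1 hj).2
    _ ≤ s * u := by rw [nsmul_eq_mul]; gcongr; exact_mod_cast hθ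

theorem measureReal_mul_lt_dH_sq_mean_le {Ω : Type*} [MeasurableSpace Ω] {μ : Measure Ω}
    [IsProbabilityMeasure μ] {k s n : ℕ} (hn : 0 < n) {Y : Fin n → Ω → Fin k → ℝ}
    (hYmeas : ∀ i, Measurable (Y i)) (hYindep : iIndepFun Y μ)
    (hYval : ∀ i ω, Y i ω ∈ simplex k) {θ : Fin k → ℝ} (hθmean : ∀ i j, ∫ ω, Y i ω j ∂μ = θ j)
    (hθsparse : sparse s θ) {u : ℝ} (hu : 0 ≤ u) :
    μ.real {ω | s * u < dH (fun j => (1 / n : ℝ) * ∑ i, Y i ω j) θ ^ 2} ≤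
      s * (2 * exp (-(n * u))) := by
  set S := Finset.univ.filter fun j => θ j ≠ 0
  set far : Fin k → Set Ω := fun j =>
    {ω | u < (√((1 / n : ℝ) * ∑ i, Y i ω j) - √(θ j)) ^ 2}
  set leak : Set Ω := {ω | ¬ ∀ i j, θ j = 0 → Y i ω j = 0}
  have hval : ∀ j i ω, Y i ω j ∈ Set.Icc (0 : ℝ) 1 :=
    fun j i ω => apply_mem_Icc_of_mem_simplex (hYval i ω) j
  have hfar : ∀ j ∈ S, μ.real (far j) ≤ 2 * exp (-(n * u)) := by
    intro j hj
    have hθpos : 0 < θ j := ((hθmean ⟨0, hn⟩ j) ▸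
      integral_nonneg fun ω => (hval j _ ω).1).lt_of_ne' (Finset.mem_filter.1 hj).2
    exact (hYindep.comp (fun _ v => v j) fun _ => measurable_pi_apply j)
      |>.measureReal_sq_sqrt_mean_sub_sqrt_gt_le (fun i => (hYmeas i).eval) (hval j)
        (fun i => hθmean i j) hn hθpos hu
  have hleak : μ.real leak = 0 := by
    refine (measureReal_eq_zero_iff (measure_ne_top μ _)).2 (ae_iff.1 ?_)
    refine ae_all_iff.2 fun i => ae_all_iff.2 fun j => ?_
    by_cases hj : θ j = 0
    · have hint : Integrable (fun ω => Y i ω j) μ :=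
        .of_mem_Icc 0 1 (hYmeas i).eval.aemeasurable (ae_of_all _ (hval j i))
      filter_upwards [(integral_eq_zero_iff_of_nonneg (fun ω => (hval j i ω).1) hint).1
        ((hθmean i j).trans hj)] with ω hω using fun _ => hω
    · exact ae_of_all _ fun ω h => absurd h hj
  calc _ ≤ μ.real ((⋃ j ∈ S, far j) ∪ leak) := by
        refine measureReal_mono fun ω hω => ?_
        by_contra h
        simp only [Set.mem_union, Set.mem_iUnion, not_or, not_exists, leak, Set.mem_ofPred_eq,
          not_not] at h
        refine (dH_sq_le_of_sparse hθsparse hu (fun j hj => ?_) fun j hj => ?_).not_gt hω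
        · exact not_lt.1 (h.1 j (Finset.mem_filter.2 ⟨Finset.mem_univ j, hj⟩))
        · simp [h.2 _ j hj]
    _ ≤ ∑ j ∈ S, μ.real (far j) + μ.real leak :=
        (measureReal_union_le _ _).trans (by gcongr; exact measureReal_biUnion_finset_le S far)
    _ ≤ S.card • (2 * exp (-(n * u))) := by
        rw [hleak, add_zero]; exact Finset.sum_le_card_nsmul _ _ _ hfar
    _ ≤ s * (2 * exp (-(n * u))) := by rw [nsmul_eq_mul]; gcongr; exact_mod_cast hθsparse

theorem sample_mean_Hellinger_sq_confidence_iid_general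
    {Ω : Type} [MeasurableSpace Ω] (μ : Measure Ω) [IsProbabilityMeasure μ]
    (k s n : ℕ) (hs1 : 1 ≤ s) (hn : 1 ≤ n)
    (Y : Fin n → Ω → Fin k → ℝ)
    (hYmeas : ∀ i, Measurable (Y i))
    (hYindep : iIndepFun Y μ)
    (hYval : ∀ i ω, Y i ω ∈ simplex k)
    (θ : Fin k → ℝ) (hθmean : ∀ i j, ∫ ω, Y i ω j ∂μ = θ j)
    (hθsparse : sparse s θ)
    (δ : ℝ) (hδ0 : 0 < δ) (hδ1 : δ < 1) :
    ENNReal.ofReal (1 - δ) ≤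
      μ {ω | dH (fun j => (1 / n : ℝ) * ∑ i, Y i ω j) θ ^ 2 ≤
        (9.75 * s * Real.log (2 * s / δ) + Real.log (2 / δ)) / n} := by
  have hn0 : (0 : ℝ) < n := by exact_mod_cast hn
  have hs : (1 : ℝ) ≤ s := by exact_mod_cast hs1
  set L := log (2 * s / δ)
  have hL : 0 ≤ L := log_nonneg ((one_le_div hδ0).2 (by linarith))
  have htail := measureReal_mul_lt_dH_sq_mean_le hn hYmeas hYindep hYval hθmean hθsparse
    (div_nonneg hL hn0.le)
  have hδ : (s : ℝ) * (2 * exp (-(n * (L / n)))) = δ := by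
    rw [mul_div_cancel₀ _ hn0.ne', exp_neg, exp_log (by positivity)]
    field_simp
  have hthreshold : s * (L / n) ≤ (9.75 * s * L + log (2 / δ)) / n := by
    rw [← mul_div_assoc]
    gcongr
    nlinarith [log_nonneg ((one_le_div hδ0).2 (by linarith) : (1 : ℝ) ≤ 2 / δ)]
  rw [← ofReal_measureReal]
  refine ENNReal.ofReal_le_ofReal ?_
  set d := fun ω => dH (fun j => (1 / n : ℝ) * ∑ i, Y i ω j) θ ^ 2
  have hcover : μ.real Set.univ ≤ μ.real {ω | d ω ≤ (9.75 * s * L + log (2 / δ)) / n} +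
      μ.real {ω | s * (L / n) < d ω} :=
    (measureReal_mono fun ω _ => (le_or_gt (d ω) _).imp id hthreshold.trans_lt).trans
      (measureReal_union_le _ _)
  rw [probReal_univ] at hcover
  linarith

/-- For i.i.d. simplex-valued observations with an `s`-sparse mean, with probability
at least `1 - δ`, `d_H²(Ȳ_n, θ*) ≤ (9.75·s·log(2s/δ) + log(2/δ))/n`. -/
theorem sample_mean_Hellinger_sq_confidence_iid
    {Ω : Type} [MeasurableSpace Ω] (μ : Measure Ω) [IsProbabilityMeasure μ]
    (k s n : ℕ) (hk : 1 ≤ k) (hs1 : 1 ≤ s) (hn : 1 ≤ n)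
    (Y : Fin n → Ω → Fin k → ℝ)
    (hYmeas : ∀ i, Measurable (Y i))
    (hYindep : iIndepFun Y μ)
    (hYid : ∀ i j, IdentDistrib (Y i) (Y j) μ μ)
    (hYval : ∀ i ω, Y i ω ∈ simplex k)
    (θ : Fin k → ℝ) (hθmean : ∀ i j, ∫ ω, Y i ω j ∂μ = θ j)
    (hθsparse : sparse s θ)
    (δ : ℝ) (hδ0 : 0 < δ) (hδ1 : δ < 1) :
    ENNReal.ofReal (1 - δ) ≤
      μ {ω | dH (fun j => (1 / n : ℝ) * ∑ i, Y i ω j) θ ^ 2 ≤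
        (9.75 * s * Real.log (2 * s / δ) + Real.log (2 / δ)) / n} :=
  sample_mean_Hellinger_sq_confidence_iid_general μ k s n hs1 hn Y hYmeas hYindep hYval θ hθmean
    hθsparse δ hδ0 hδ1
end
end
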